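/- For positive constants W₁, Gᵢ, Dᵢ, Fᵢ, B, T and w ≥ 1, s > 0, the function (f₁,…,f_N) ↦ W₁·Σᵢ Gᵢ·(2^(Dᵢ·fᵢ/(B·(T·fᵢ − Fᵢ))) − 1) + s·(Σᵢ fᵢ)^w is convex on the open convex set {f : fᵢ > Fᵢ/T for all i}, and hence the per-UAV computing capacity allocation problem with linear constraints Σᵢ fᵢ ≤ f_max and fᵢ ≥ fᵢ_min > Fᵢ/T is a convex optimization problem. -/

import Mathlib

open Real Set

/-- Composition with `exp` preserves convexity. -/
lemma exp_comp_convexOn {E : Type*} [AddCommMonoid E] [Module ℝ E] {s : Set E} {u : E → ℝ}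
    (hu : ConvexOn ℝ s u) : ConvexOn ℝ s fun x => Real.exp (u x) := by
  refine ⟨hu.1, fun x hx y hy a b ha hb hab => ?_⟩
  calc Real.exp (u (a • x + b • y)) ≤ Real.exp (a • u x + b • u y) :=
        Real.exp_le_exp.2 (hu.2 hx hy ha hb hab)
    _ ≤ a • Real.exp (u x) + b • Real.exp (u y) :=
        convexOn_exp.2 (Set.mem_univ _) (Set.mem_univ _) ha hb hab

/-- A finite sum of convex functions is convex. -/
lemma finset_sum_convexOn {ι E : Type*} [AddCommMonoid E] [Module ℝ E] {s : Set E}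
    (hs : Convex ℝ s) (t : Finset ι) (f : ι → E → ℝ)
    (h : ∀ i ∈ t, ConvexOn ℝ s (f i)) : ConvexOn ℝ s fun x => ∑ i ∈ t, f i x := by
  induction t using Finset.cons_induction with
  | empty => simpa using convexOn_const 0 hs
  | cons i t hit ih =>
    simp only [Finset.sum_cons]
    exact (h i (Finset.mem_cons_self _ _)).add (ih fun j hj => h j (Finset.mem_cons_of_mem hj))

/-- One-dimensional convexity of the transmit-power term. -/
lemma one_dim_convex (G D F B T : ℝ) (hG : 0 < G) (hD : 0 < D) (hF : 0 < F)
    (hB : 0 < B) (hT : 0 < T) :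
    ConvexOn ℝ (Set.Ioi (F / T))
      (fun x : ℝ => G * ((2 : ℝ) ^ (D * x / (B * (T * x - F))) - 1)) := by
  set c := F / T with hc
  set K := Real.log 2 * D * F / (B * T ^ 2) with hK
  set A := (2 : ℝ) ^ (D / (B * T)) with hA
  have hlog2 : 0 < Real.log 2 := Real.log_pos (by norm_num)
  have hK0 : 0 ≤ K := by positivity
  have hA0 : 0 < A := Real.rpow_pos_of_pos two_pos _
  -- convexity of x ↦ x⁻¹ on Ioi 0
  have h0 : ConvexOn ℝ (Set.Ioi (0 : ℝ)) (fun x : ℝ => x⁻¹) :=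
    (convexOn_zpow (-1)).congr fun x _ => by simp [zpow_neg_one]
  -- translate
  have h1 : ConvexOn ℝ (Set.Ioi c) (fun x : ℝ => (x - c)⁻¹) := by
    have ht := h0.translate_right (-c)
    have hset : ((fun z : ℝ => -c + z) ⁻¹' Set.Ioi 0) = Set.Ioi c := by
      ext x; simp [neg_add_eq_sub, sub_pos]
    rw [hset] at ht
    exact ht.congr fun x _ => by simp [Function.comp, neg_add_eq_sub]
  have h2 : ConvexOn ℝ (Set.Ioi c) (fun x : ℝ => K * (x - c)⁻¹) := by
    simpa [smul_eq_mul] using h1.smul hK0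
  have h3 := exp_comp_convexOn h2
  have h4 : ConvexOn ℝ (Set.Ioi c)
      (fun x : ℝ => G * A * Real.exp (K * (x - c)⁻¹) + (-G)) := by
    have := (h3.smul (show (0:ℝ) ≤ G * A by positivity)).add_const (-G)
    exact this.congr fun x _ => by simp [smul_eq_mul]
  refine h4.congr fun x hx => ?_
  have hxc : 0 < x - c := sub_pos.2 hx
  have key : (2 : ℝ) ^ (D * x / (B * (T * x - F))) = A * Real.exp (K * (x - c)⁻¹) := by
    have hexp : Real.log 2 * (D * x / (B * (T * x - F)))
        = Real.log 2 * (D / (B * T)) + K * (x - c)⁻¹ := by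
      have hden : T * x - F ≠ 0 := by
        have h : T * x - F = T * (x - c) := by rw [hc]; field_simp
        rw [h]; positivity
      have hxf : T * x - F = T * (x - c) := by rw [hc]; field_simp
      have hFc : F = T * c := by rw [hc]; field_simp
      rw [hK, hxf, hFc]
      field_simp [hxc.ne']
      ring
    rw [Real.rpow_def_of_pos two_pos, hexp, Real.exp_add, hA,
      Real.rpow_def_of_pos two_pos]
  rw [key]; ring

theorem capacity_allocation_convex (N : ℕ) (W₁ B T s w fmax : ℝ)
    (G D F fmin : Fin N → ℝ)
    (hW₁ : 0 < W₁) (hB : 0 < B) (hT : 0 < T) (hs : 0 < s) (hw : 1 ≤ w)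
    (hG : ∀ i, 0 < G i) (hD : ∀ i, 0 < D i) (hF : ∀ i, 0 < F i)
    (hfmin : ∀ i, F i / T < fmin i) :
    ConvexOn ℝ {f : Fin N → ℝ | ∀ i, F i / T < f i}
      (fun f : Fin N → ℝ =>
        W₁ * ∑ i, G i * ((2 : ℝ) ^ (D i * f i / (B * (T * f i - F i))) - 1)
          + s * (∑ i, f i) ^ w) ∧
    Convex ℝ ({f : Fin N → ℝ | ∀ i, F i / T < f i} ∩
      {f : Fin N → ℝ | (∀ i, fmin i ≤ f i) ∧ (∑ i, f i) ≤ fmax}) := by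
  set S := {f : Fin N → ℝ | ∀ i, F i / T < f i} with hSdef
  have hlin_eval : ∀ i : Fin N, IsLinearMap ℝ (fun f : Fin N → ℝ => f i) :=
    fun i => ⟨fun _ _ => rfl, fun _ _ => rfl⟩
  have hS : Convex ℝ S := by
    have hrw : S = ⋂ i, (fun f : Fin N → ℝ => f i) ⁻¹' Set.Ioi (F i / T) := by
      ext f; simp [hSdef, Set.mem_iInter]
    rw [hrw]
    exact convex_iInter fun i => (convex_Ioi _).is_linear_preimage (hlin_eval i)
  -- the linear "sum" map
  let L : (Fin N → ℝ) →ₗ[ℝ] ℝ :=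
    { toFun := fun f => ∑ i, f i
      map_add' := fun f g => by simp [Finset.sum_add_distrib]
      map_smul' := fun m f => by simp [Finset.mul_sum, smul_eq_mul] }
  constructor
  · -- convexity of the objective
    have term1 : ∀ i : Fin N, ConvexOn ℝ S
        (fun f : Fin N → ℝ => G i * ((2 : ℝ) ^ (D i * f i / (B * (T * f i - F i))) - 1)) := by
      intro i
      have h1 := (one_dim_convex (G i) (D i) (F i) B T (hG i) (hD i) (hF i) hB hT).comp_linearMap
        (LinearMap.proj (R := ℝ) (φ := fun _ : Fin N => ℝ) i)
      exact h1.subset (fun f hf => hf i) hS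
    have hsum : ConvexOn ℝ S
        (fun f : Fin N → ℝ => ∑ i, G i * ((2 : ℝ) ^ (D i * f i / (B * (T * f i - F i))) - 1)) :=
      finset_sum_convexOn hS Finset.univ _ fun i _ => term1 i
    have hW : ConvexOn ℝ S
        (fun f : Fin N → ℝ =>
          W₁ * ∑ i, G i * ((2 : ℝ) ^ (D i * f i / (B * (T * f i - F i))) - 1)) := by
      simpa [smul_eq_mul] using hsum.smul hW₁.le
    have hpow : ConvexOn ℝ S (fun f : Fin N → ℝ => s * (∑ i, f i) ^ w) := by
      have h1 := (convexOn_rpow hw).comp_linearMap L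
      have hsub : S ⊆ L ⁻¹' Set.Ici 0 := by
        intro f hf
        simp only [Set.mem_preimage, Set.mem_Ici, L, LinearMap.coe_mk, AddHom.coe_mk]
        exact Finset.sum_nonneg fun i _ =>
          le_of_lt (lt_trans (div_pos (hF i) hT) (hf i))
      have h2 := (h1.subset hsub hS).smul hs.le
      simpa [smul_eq_mul, Function.comp, L] using h2
    exact hW.add hpow
  · -- convexity of the feasible region
    refine hS.inter ?_
    have hrw : {f : Fin N → ℝ | (∀ i, fmin i ≤ f i) ∧ (∑ i, f i) ≤ fmax}
        = (⋂ i, (fun f : Fin N → ℝ => f i) ⁻¹' Set.Ici (fmin i))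
          ∩ ((fun f : Fin N → ℝ => ∑ i, f i) ⁻¹' Set.Iic fmax) := by
      ext f; simp [Set.mem_iInter]
    rw [hrw]
    exact (convex_iInter fun i => (convex_Ici _).is_linear_preimage (hlin_eval i)).inter
      ((convex_Iic _).is_linear_preimage
        ⟨fun f g => by simp [Finset.sum_add_distrib], fun m f => by simp [Finset.mul_sum, smul_eq_mul]⟩)
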